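/- arXiv:0910.3093 — 8 statements merged into one kernel-verified Lean document; each statement's English description precedes it below -/
import Mathlib

section
/- Let Γ = (Γ₀, Γ₁, ν, τ) be a connected valued stable translation quiver and let f : Γ₀ → ℕ₀ be a subadditive function with f ∘ τ = f. Then either f is identically zero, or f(x) > 0 for every vertex x ∈ Γ₀. -/
/-- A valued stable translation quiver `(Γ₀, Γ₁, ν, τ)`: the vertex set is `V`, the
arrow set `Γ₁ ⊆ Γ₀ × Γ₀` is given by the relation `Arrow`, `ν` is a valuation with
`Γ₁ = ν⁻¹(ℕ₊ × ℕ₊)`, the quiver has no loops and is locally finite, and `τ` is a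
translation satisfying `ν(τ(b),a) = Δ(ν(a,b))` for all arrows `(a,b)`. -/
structure ValuedStableTranslationQuiver (V : Type*) where
  /-- the arrow relation -/
  Arrow : V → V → Prop
  /-- the valuation -/
  nu : V → V → ℕ × ℕ
  /-- the translation -/
  tau : V ≃ V
  arrow_iff : ∀ x y, Arrow x y ↔ (0 < (nu x y).1 ∧ 0 < (nu x y).2)
  no_loops : ∀ x, ¬ Arrow x x
  locally_finite : ∀ x, {y | Arrow x y ∨ Arrow y x}.Finite
  tau_arrow : ∀ x y, Arrow (tau x) (tau y) ↔ Arrow x y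
  translation : ∀ a y, Arrow y a ↔ Arrow (tau a) y
  valued : ∀ a b, Arrow a b → nu (tau b) a = ((nu a b).2, (nu a b).1)

namespace ValuedStableTranslationQuiver

variable {V : Type*} (Q : ValuedStableTranslationQuiver V)

/-- the set of predecessors of a vertex is finite -/
theorem predsFinite (y : V) : {x | Q.Arrow x y}.Finite :=
  (Q.locally_finite y).subset fun _ hx => Or.inr hx

/-- the finset of predecessors `y⁻` of a vertex `y` -/
noncomputable def preds (y : V) : Finset V := (Q.predsFinite y).toFinset

/-- a function `f : Γ₀ → ℕ₀` is subadditive if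
`f(y) + f(τ(y)) ≥ ∑_{x ∈ y⁻} f(x)·pr₁(ν(x,y))` for all vertices `y` -/
def Subadditive (f : V → ℕ) : Prop :=
  ∀ y, ∑ x ∈ Q.preds y, f x * (Q.nu x y).1 ≤ f y + f (Q.tau y)

/-- a function `f : Γ₀ → ℕ₀` is additive if
`f(y) + f(τ(y)) = ∑_{x ∈ y⁻} f(x)·pr₁(ν(x,y))` for all vertices `y` -/
def Additive (f : V → ℕ) : Prop :=
  ∀ y, f y + f (Q.tau y) = ∑ x ∈ Q.preds y, f x * (Q.nu x y).1

/-- connectedness of the underlying undirected graph -/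
def Connected : Prop :=
  ∀ x y : V, Relation.ReflTransGen (fun a b => Q.Arrow a b ∨ Q.Arrow b a) x y

end ValuedStableTranslationQuiver

/-!
A zero of `f` spreads to every neighbour: if `f a = 0` then also `f (τ a) = 0`, so
subadditivity at `a` forces `f x · pr₁ ν(x, a) = 0` for each predecessor `x` of `a`, and
`pr₁ ν(x, a) > 0` on arrows. Successors `b` of `a` are reached through the arrow
`τ b → a` and `f ∘ τ = f`. By connectedness the zero then spreads to all of `Γ₀`.
-/

namespace ValuedStableTranslationQuiver

variable {V : Type*} {Q : ValuedStableTranslationQuiver V} {f : V → ℕ}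

theorem mem_preds {x y : V} : x ∈ Q.preds y ↔ Q.Arrow x y :=
  (Q.predsFinite y).mem_toFinset

theorem Subadditive.eq_zero_of_arrow (hsub : Q.Subadditive f) {a b : V} (ha : f a = 0)
    (hτa : f (Q.tau a) = 0) (hba : Q.Arrow b a) : f b = 0 := by
  have hterm : f b * (Q.nu b a).1 ≤ ∑ x ∈ Q.preds a, f x * (Q.nu x a).1 :=
    Finset.single_le_sum (f := fun x => f x * (Q.nu x a).1) (fun _ _ => Nat.zero_le _)
      (mem_preds.2 hba)
  have hprod : f b * (Q.nu b a).1 = 0 := by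
    have := hsub a
    rw [ha, hτa] at this
    omega
  exact (Nat.mul_eq_zero.mp hprod).resolve_right ((Q.arrow_iff b a).mp hba).1.ne'

theorem Subadditive.eq_zero_of_adj (hsub : Q.Subadditive f) (hτ : ∀ x, f (Q.tau x) = f x)
    {a b : V} (ha : f a = 0) (hab : Q.Arrow a b ∨ Q.Arrow b a) : f b = 0 := by
  have hτa : f (Q.tau a) = 0 := (hτ a).trans ha
  rcases hab with hab | hba
  · rw [← hτ b]
    exact hsub.eq_zero_of_arrow ha hτa ((Q.translation b a).mp hab)
  · exact hsub.eq_zero_of_arrow ha hτa hba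

theorem Subadditive.eq_zero_of_reflTransGen (hsub : Q.Subadditive f)
    (hτ : ∀ x, f (Q.tau x) = f x) {a b : V}
    (hab : Relation.ReflTransGen (fun x y => Q.Arrow x y ∨ Q.Arrow y x) a b) (ha : f a = 0) :
    f b = 0 := by
  induction hab with
  | refl => exact ha
  | tail _ hcd ih => exact hsub.eq_zero_of_adj hτ ih hcd

end ValuedStableTranslationQuiver

/-- Proposition 1.1(1): If `f` is a subadditive function on a connected valued stable
translation quiver with `f ∘ τ = f`, then either `f = 0` or `f(x) > 0` for all `x`. -/
theorem statement0 {V : Type*} (Q : ValuedStableTranslationQuiver V)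
    (hconn : Q.Connected) (f : V → ℕ)
    (hsub : Q.Subadditive f) (htau : ∀ x, f (Q.tau x) = f x) :
    (∀ x, f x = 0) ∨ (∀ x, 0 < f x) := by
  refine or_iff_not_imp_right.2 fun hnotpos y => ?_
  obtain ⟨x₀, hx₀⟩ := not_forall.1 hnotpos
  exact hsub.eq_zero_of_reflTransGen htau (hconn x₀ y) (Nat.eq_zero_of_not_pos hx₀)
end

section
/- Let Γ = (Γ₀, Γ₁, ν, τ) be a valued stable translation quiver such that ⟨τ⟩ is an admissible subgroup of the automorphism group of Γ. Then the prescription d([x],[y]) := pr₁(ν(a,b)) whenever there exist a ∈ [x] and b ∈ [y] with (a,b) ∈ Γ₁, and d([x],[y]) := 0 if no such pair exists, is well defined (independent of the chosen representatives), and (Γ₀/⟨τ⟩, d) is a valued graph: d([x],[x]) = 0 for every orbit [x], d([x],[y]) ≠ 0 if and only if d([y],[x]) ≠ 0, and for each orbit [x] only finitely many orbits [y] satisfy d([x],[y]) ≠ 0. -/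
namespace ValuedStableTranslationQuiver

variable {V : Type*} (Q : ValuedStableTranslationQuiver V)

/-- the `⟨τ⟩`-orbit equivalence relation on the vertices -/
def tauSetoid : Setoid V where
  r a b := ∃ k : ℤ, (Q.tau ^ k) a = b
  iseqv := by
    constructor
    · exact fun a => ⟨0, by simp⟩
    · rintro a b ⟨k, rfl⟩
      exact ⟨-k, by rw [← Equiv.Perm.mul_apply, ← zpow_add]; simp⟩
    · rintro a b c ⟨k, rfl⟩ ⟨l, rfl⟩
      exact ⟨l + k, by rw [zpow_add, Equiv.Perm.mul_apply]⟩

/-- `⟨τ⟩` is an admissible subgroup of `Aut(Γ)`. -/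
def TauAdmissible : Prop :=
  ∀ x y : V,
    (Set.range (fun k : ℤ => (Q.tau ^ k) x) ∩ ({y} ∪ {z | Q.Arrow y z})).Subsingleton ∧
    (Set.range (fun k : ℤ => (Q.tau ^ k) x) ∩ ({y} ∪ {z | Q.Arrow z y})).Subsingleton

end ValuedStableTranslationQuiver

/-!
Since `a → b` gives `τ b → a` and then `τ a → τ b`, applying the rule `ν(τ b, a) = Δ ν(a, b)`
twice shows that `τ`, and hence every power of `τ`, is an automorphism of the valued quiver.
Admissibility says that an orbit meets each `y⁺` at most once, which makes `d` well defined,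
and, as `y ∈ [y]`, that `y⁺ ∩ [y] = ∅`, which is `d([y], [y]) = 0`. Symmetry comes from
`a → b ⇒ τ b → a`, and finiteness from the finiteness of `x⁺`.
-/

namespace ValuedStableTranslationQuiver

variable {V : Type*} (Q : ValuedStableTranslationQuiver V)

def valuedAut : Subgroup (Equiv.Perm V) where
  carrier := {σ | (∀ a b, Q.Arrow (σ a) (σ b) ↔ Q.Arrow a b) ∧
    ∀ a b, Q.Arrow a b → Q.nu (σ a) (σ b) = Q.nu a b}
  one_mem' := ⟨fun _ _ => Iff.rfl, fun _ _ _ => rfl⟩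
  mul_mem' := by
    rintro σ ρ ⟨hσ, hνσ⟩ ⟨hρ, hνρ⟩
    refine ⟨fun a b => (hσ _ _).trans (hρ a b), fun a b hab => ?_⟩
    simp only [Equiv.Perm.mul_apply]
    rw [hνσ _ _ ((hρ a b).2 hab), hνρ a b hab]
  inv_mem' := by
    rintro σ ⟨hσ, hνσ⟩
    have harrow : ∀ a b, Q.Arrow (σ⁻¹ a) (σ⁻¹ b) ↔ Q.Arrow a b := fun a b => by
      simpa using (hσ (σ⁻¹ a) (σ⁻¹ b)).symm
    refine ⟨harrow, fun a b hab => ?_⟩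
    simpa using (hνσ _ _ ((harrow a b).2 hab)).symm

theorem tau_mem_valuedAut : Q.tau ∈ Q.valuedAut := by
  refine ⟨Q.tau_arrow, fun a b hab => ?_⟩
  have hba : Q.Arrow (Q.tau b) a := (Q.translation b a).1 hab
  have h := Q.valued _ _ hba
  rw [Q.valued a b hab] at h
  simpa using h

theorem arrow_zpow_iff (k : ℤ) (a b : V) :
    Q.Arrow ((Q.tau ^ k) a) ((Q.tau ^ k) b) ↔ Q.Arrow a b :=
  (Q.valuedAut.zpow_mem Q.tau_mem_valuedAut k).1 a b

theorem nu_zpow {a b : V} (k : ℤ) (hab : Q.Arrow a b) :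
    Q.nu ((Q.tau ^ k) a) ((Q.tau ^ k) b) = Q.nu a b :=
  (Q.valuedAut.zpow_mem Q.tau_mem_valuedAut k).2 a b hab

/-- `d([x], [y]) ≠ 0` -/
def OrbitArrow (x y : V) : Prop :=
  ∃ a b : V, (∃ k : ℤ, (Q.tau ^ k) x = a) ∧ (∃ k : ℤ, (Q.tau ^ k) y = b) ∧ Q.Arrow a b

section

variable {Q}

theorem OrbitArrow.symm {x y : V} : Q.OrbitArrow x y → Q.OrbitArrow y x := by
  rintro ⟨a, b, ⟨k, rfl⟩, ⟨l, rfl⟩, hab⟩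
  refine ⟨Q.tau ((Q.tau ^ l) y), (Q.tau ^ k) x, ⟨1 + l, ?_⟩, ⟨k, rfl⟩,
    (Q.translation _ _).1 hab⟩
  rw [zpow_add, zpow_one, Equiv.Perm.mul_apply]

theorem TauAdmissible.eq_of_arrow_of_arrow (hadm : Q.TauAdmissible) {x y : V} {k l : ℤ}
    (hk : Q.Arrow y ((Q.tau ^ k) x)) (hl : Q.Arrow y ((Q.tau ^ l) x)) :
    (Q.tau ^ k) x = (Q.tau ^ l) x :=
  (hadm x y).1 ⟨⟨k, rfl⟩, Or.inr hk⟩ ⟨⟨l, rfl⟩, Or.inr hl⟩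

theorem TauAdmissible.not_arrow_zpow_self (hadm : Q.TauAdmissible) (a : V) (k : ℤ) :
    ¬ Q.Arrow a ((Q.tau ^ k) a) := fun h => by
  have hfix : a = (Q.tau ^ k) a :=
    (hadm a a).1 ⟨⟨0, rfl⟩, Or.inl rfl⟩ ⟨⟨k, rfl⟩, Or.inr h⟩
  rw [← hfix] at h
  exact Q.no_loops a h

theorem TauAdmissible.nu_eq_of_orbit (hadm : Q.TauAdmissible) {a b a' b' : V}
    (ha : ∃ k : ℤ, (Q.tau ^ k) a = a') (hb : ∃ k : ℤ, (Q.tau ^ k) b = b')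
    (hab : Q.Arrow a b) (hab' : Q.Arrow a' b') : Q.nu a b = Q.nu a' b' := by
  obtain ⟨k, rfl⟩ := ha
  obtain ⟨l, rfl⟩ := hb
  have hb' : (Q.tau ^ k) b = (Q.tau ^ l) b :=
    hadm.eq_of_arrow_of_arrow ((Q.arrow_zpow_iff k a b).2 hab) hab'
  rw [← hb', Q.nu_zpow k hab]

end

theorem finite_orbitArrow_target (x : V) :
    {c : Quotient Q.tauSetoid | ∃ a b : V, (∃ k : ℤ, (Q.tau ^ k) x = a) ∧
      Quotient.mk Q.tauSetoid b = c ∧ Q.Arrow a b}.Finite := by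
  have hsucc : {y | Q.Arrow x y}.Finite := (Q.locally_finite x).subset fun _ => Or.inl
  refine (hsucc.image (Quotient.mk Q.tauSetoid)).subset ?_
  rintro c ⟨_, b, ⟨k, rfl⟩, rfl, hab⟩
  refine ⟨(Q.tau ^ k).symm b, ?_, Quotient.sound ⟨k, Equiv.apply_symm_apply _ _⟩⟩
  rwa [Set.mem_ofPred, ← Q.arrow_zpow_iff k, Equiv.apply_symm_apply]

end ValuedStableTranslationQuiver

open ValuedStableTranslationQuiver in
/-- Lemma 1.3(1): if `⟨τ⟩` is admissible, then `d([x],[y]) := pr₁(ν(a,b))` whenever there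
are `a ∈ [x]`, `b ∈ [y]` with an arrow `a → b` (and `d([x],[y]) := 0` otherwise) is well
defined and turns the set of `⟨τ⟩`-orbits `Γ₀/⟨τ⟩` into a valued graph. -/
theorem statement3 {V : Type*} (Q : ValuedStableTranslationQuiver V)
    (hadm : Q.TauAdmissible) :
    -- `d` is well defined (independent of the chosen representatives)
    (∀ a b a' b' : V, (∃ k : ℤ, (Q.tau ^ k) a = a') → (∃ k : ℤ, (Q.tau ^ k) b = b') →
      Q.Arrow a b → Q.Arrow a' b' → (Q.nu a b).1 = (Q.nu a' b').1) ∧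
    -- `d([x],[x]) = 0` : no arrows within a single orbit
    (∀ a b : V, (∃ k : ℤ, (Q.tau ^ k) a = b) → ¬ Q.Arrow a b) ∧
    -- `d([x],[y]) ≠ 0 ↔ d([y],[x]) ≠ 0`
    (∀ x y : V,
      (∃ a b : V, (∃ k : ℤ, (Q.tau ^ k) x = a) ∧ (∃ k : ℤ, (Q.tau ^ k) y = b) ∧ Q.Arrow a b) ↔
      (∃ a b : V, (∃ k : ℤ, (Q.tau ^ k) y = a) ∧ (∃ k : ℤ, (Q.tau ^ k) x = b) ∧ Q.Arrow a b)) ∧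
    -- for each orbit `[x]`, only finitely many orbits `[y]` satisfy `d([x],[y]) ≠ 0`
    (∀ x : V, {c : Quotient (tauSetoid Q) |
      ∃ a b : V, (∃ k : ℤ, (Q.tau ^ k) x = a) ∧ Quotient.mk (tauSetoid Q) b = c ∧
        Q.Arrow a b}.Finite) := by
  refine ⟨fun _ _ _ _ ha hb hab hab' => congrArg Prod.fst (hadm.nu_eq_of_orbit ha hb hab hab'),
    ?_, fun _ _ => ⟨OrbitArrow.symm, OrbitArrow.symm⟩, Q.finite_orbitArrow_target⟩
  rintro a _ ⟨k, rfl⟩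
  exact hadm.not_arrow_zpow_self a k
end

section
/- Let f : ℤ × ℕ₊ → ℕ₀ be a function on the vertices of ℤ[A_∞] with f ∘ τ = f (so that f depends only on the quasi-length; write φ(i) for the common value of f on vertices of quasi-length i, with the convention φ(0) := 0). Suppose there is ℓ ≥ 1 such that f(y) + f(τ(y)) = Σ_{x ∈ y⁻} f(x) for every vertex y of quasi-length ≥ ℓ. Then for every i ≥ ℓ one has the identity of integers φ(i) = (φ(ℓ) − φ(ℓ−1))·(i − ℓ) + φ(ℓ). Moreover, if f is bounded, then φ(i) = φ(i') for all i, i' ≥ max(ℓ−1, 1). -/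
/-! Additivity at quasi-length `k ≥ ℓ` says `2 φ(k) = φ(k-1) + φ(k+1)` (for `k = 1` thanks to
`φ(0) = 0`), so from `ℓ - 1` on `φ` is an arithmetic progression. A non-constant arithmetic
progression is unbounded, so a bounded `f` forces the common difference `φ(ℓ) - φ(ℓ-1)` to
vanish. -/

lemma Int.eq_arithProgression_of_add_self_eq (a : ℕ → ℤ) (ℓ : ℕ)
    (h : ∀ k, ℓ ≤ k → a k + a k = a (k - 1) + a (k + 1)) :
    ∀ i, ℓ ≤ i → a i = (a ℓ - a (ℓ - 1)) * ((i : ℤ) - ℓ) + a ℓ := by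
  have hstep : ∀ i, ℓ ≤ i → a (i + 1) - a i = a ℓ - a (ℓ - 1) := by
    intro i hi
    induction i, hi using Nat.le_induction with
    | base => linarith [h ℓ le_rfl]
    | succ j hj ih =>
      have hj1 := h (j + 1) (by omega)
      rw [Nat.add_sub_cancel] at hj1
      linarith
  intro i hi
  induction i, hi using Nat.le_induction with
  | base => ring
  | succ j hj ih =>
    push_cast
    linear_combination ih + hstep j hj

lemma Int.eq_zero_of_abs_mul_add_le (d c C : ℤ) (h : ∀ t : ℕ, |d * t + c| ≤ C) : d = 0 := by
  by_contra hd
  set t := (C + |c| + 1).toNat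
  have ht : C + |c| + 1 ≤ t := Int.self_le_toNat _
  have hdt : (t : ℤ) ≤ |d * t| := by
    rw [abs_mul, Nat.abs_cast]
    exact le_mul_of_one_le_left (by positivity) (Int.one_le_abs hd)
  have := abs_sub_abs_le_abs_add (d * t) c
  linarith [h t]

lemma add_self_eq_of_additive {f : ℤ × ℕ → ℕ} {φ : ℕ → ℕ} (hφ0 : φ 0 = 0)
    (hφ : ∀ (n : ℤ) (i : ℕ), 1 ≤ i → φ i = f (n, i))
    {n : ℤ} {k : ℕ} (hk : 1 ≤ k)
    (hadd : f (n, k) + f (n - 1, k) =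
      if k = 1 then f (n - 1, 2) else f (n, k - 1) + f (n - 1, k + 1)) :
    φ k + φ k = φ (k - 1) + φ (k + 1) := by
  split_ifs at hadd with hk1
  · subst hk1
    rw [← hφ n 1 le_rfl, ← hφ (n - 1) 1 le_rfl, ← hφ (n - 1) 2 (by omega)] at hadd
    rw [Nat.sub_self, hφ0, hadd, zero_add]
  · rw [← hφ n k hk, ← hφ (n - 1) k hk, ← hφ n (k - 1) (by omega),
      ← hφ (n - 1) (k + 1) (by omega)] at hadd
    exact hadd

theorem statement6_general (f : ℤ × ℕ → ℕ)
    (φ : ℕ → ℕ) (hφ0 : φ 0 = 0)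
    (hφ : ∀ (n : ℤ) (i : ℕ), 1 ≤ i → φ i = f (n, i))
    (ℓ : ℕ) (hℓ : 1 ≤ ℓ)
    (hadd : ∀ (n : ℤ) (i : ℕ), ℓ ≤ i →
      f (n, i) + f (n - 1, i) =
        if i = 1 then f (n - 1, 2) else f (n, i - 1) + f (n - 1, i + 1)) :
    (∀ i : ℕ, ℓ ≤ i →
      (φ i : ℤ) = ((φ ℓ : ℤ) - (φ (ℓ - 1) : ℤ)) * ((i : ℤ) - (ℓ : ℤ)) + (φ ℓ : ℤ)) ∧
    ((∃ C : ℕ, ∀ (n : ℤ) (i : ℕ), 1 ≤ i → f (n, i) ≤ C) →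
      ∀ i i' : ℕ, max (ℓ - 1) 1 ≤ i → max (ℓ - 1) 1 ≤ i' → φ i = φ i') := by
  have hlinear := Int.eq_arithProgression_of_add_self_eq (fun i ↦ (φ i : ℤ)) ℓ fun k hk ↦ by
    exact_mod_cast add_self_eq_of_additive hφ0 hφ (hℓ.trans hk) (hadd 0 k hk)
  refine ⟨hlinear, ?_⟩
  rintro ⟨C, hC⟩ i i' hi hi'
  have hslope : (φ ℓ : ℤ) - φ (ℓ - 1) = 0 := by
    refine Int.eq_zero_of_abs_mul_add_le _ (φ ℓ) C fun t ↦ ?_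
    have hbound : φ (ℓ + t) ≤ C := hφ 0 (ℓ + t) (by omega) ▸ hC 0 (ℓ + t) (by omega)
    have := hlinear (ℓ + t) (by omega)
    push_cast at this
    rw [abs_le]
    constructor <;> linarith
  have hconst : ∀ j, max (ℓ - 1) 1 ≤ j → φ j = φ ℓ := by
    intro j hj
    rcases (show ℓ ≤ j ∨ j = ℓ - 1 by omega) with hj | rfl
    · have := hlinear j hj
      rw [hslope] at this
      omega
    · omega
  rw [hconst i hi, hconst i' hi']

/-- Lemma 1.4(1): let `f` be a function on the vertices of `ℤ[A_∞]` with `f ∘ τ = f`,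
`φ` the induced function of the quasi-length (with the convention `φ(0) = 0`), and
suppose `f(y) + f(τ(y)) = ∑_{x ∈ y⁻} f(x)` for all vertices of quasi-length `≥ ℓ`.
Then `φ(i) = (φ(ℓ) - φ(ℓ-1))·(i - ℓ) + φ(ℓ)` for every `i ≥ ℓ`; and if `f` is bounded,
then `φ` is constant on quasi-lengths `≥ max (ℓ-1) 1`. -/
theorem statement6 (f : ℤ × ℕ → ℕ)
    (htau : ∀ (n : ℤ) (i : ℕ), 1 ≤ i → f (n - 1, i) = f (n, i))
    (φ : ℕ → ℕ) (hφ0 : φ 0 = 0)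
    (hφ : ∀ (n : ℤ) (i : ℕ), 1 ≤ i → φ i = f (n, i))
    (ℓ : ℕ) (hℓ : 1 ≤ ℓ)
    (hadd : ∀ (n : ℤ) (i : ℕ), ℓ ≤ i →
      f (n, i) + f (n - 1, i) =
        if i = 1 then f (n - 1, 2) else f (n, i - 1) + f (n - 1, i + 1)) :
    (∀ i : ℕ, ℓ ≤ i →
      (φ i : ℤ) = ((φ ℓ : ℤ) - (φ (ℓ - 1) : ℤ)) * ((i : ℤ) - (ℓ : ℤ)) + (φ ℓ : ℤ)) ∧
    ((∃ C : ℕ, ∀ (n : ℤ) (i : ℕ), 1 ≤ i → f (n, i) ≤ C) →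
      ∀ i i' : ℕ, max (ℓ - 1) 1 ≤ i → max (ℓ - 1) 1 ≤ i' → φ i = φ i') :=
  statement6_general f φ hφ0 hφ ℓ hℓ hadd
end

section
/- Let f : ℤ × ℕ₊ → ℕ₀ be a subadditive function on ℤ[A_∞] with f ∘ τ = f (write φ(i) for the common value of f on vertices of quasi-length i), and let ℓ ≥ 1 be such that f(y) + f(τ(y)) = Σ_{x ∈ y⁻} f(x) for every vertex y of quasi-length ≥ ℓ. Assume (a) φ(1) = φ(2), and (b) φ(i) ≥ φ(1) for every i with 1 ≤ i < ℓ. Then f is constant: f(x) = φ(1) for every vertex x of ℤ[A_∞]. -/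
/-!
Since `f` depends only on the quasi-length, subadditivity at a vertex of quasi-length `i ≥ 2` says
`φ(i-1) + φ(i+1) ≤ 2 φ(i)`: the function `φ` is concave. A concave sequence of natural numbers
is non-decreasing, since a negative increment would force all later increments to be negative
too and drive the sequence below zero. Concavity also makes the increments non-increasing, so
once `φ(2) - φ(1) = 0` every increment is `0`.
-/

section ConcaveSequence

variable {u : ℕ → ℕ} (hu : ∀ k, u k + u (k + 2) ≤ 2 * u (k + 1))
include hu

theorem increment_le_increment_of_concave {j k : ℕ} (hjk : j ≤ k) :
    u (k + 1) + u j ≤ u k + u (j + 1) := by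
  induction k, hjk using Nat.le_induction with
  | base => omega
  | succ k _ ih =>
    show u (k + 2) + u j ≤ u (k + 1) + u (j + 1)
    have := hu k
    omega

theorem apply_le_apply_succ_of_concave (k : ℕ) : u k ≤ u (k + 1) := by
  by_contra! hdrop
  have hdecay : ∀ m, u (k + m) + m ≤ u k := by
    intro m
    induction m with
    | zero => simp
    | succ m ih =>
      have := increment_le_increment_of_concave hu (Nat.le_add_right k m)
      show u (k + m + 1) + (m + 1) ≤ u k
      omega
  have := hdecay (u k + 1)
  omega

theorem apply_eq_apply_zero_of_concave (h01 : u 0 = u 1) (k : ℕ) : u k = u 0 := by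
  induction k with
  | zero => rfl
  | succ k ih =>
    have := increment_le_increment_of_concave hu (Nat.zero_le k)
    rw [Nat.zero_add] at this
    have := apply_le_apply_succ_of_concave hu k
    omega

end ConcaveSequence

theorem statement7_general (f : ℤ × ℕ → ℕ)
    (hsub : ∀ (n : ℤ) (i : ℕ), 1 ≤ i →
      (if i = 1 then f (n - 1, 2) else f (n, i - 1) + f (n - 1, i + 1)) ≤
        f (n, i) + f (n - 1, i))
    (φ : ℕ → ℕ)
    (hφ : ∀ (n : ℤ) (i : ℕ), 1 ≤ i → φ i = f (n, i))
    (h12 : φ 1 = φ 2) :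
    ∀ (n : ℤ) (i : ℕ), 1 ≤ i → f (n, i) = φ 1 := by
  have hconcave : ∀ k, φ (k + 1) + φ (k + 3) ≤ 2 * φ (k + 2) := by
    intro k
    have h := hsub 0 (k + 2) (by omega)
    rw [if_neg (by omega), show k + 2 - 1 = k + 1 by omega, show k + 2 + 1 = k + 3 from rfl] at h
    rw [← hφ 0 (k + 1) (by omega), ← hφ 0 (k + 2) (by omega), ← hφ (0 - 1) (k + 3) (by omega),
      ← hφ (0 - 1) (k + 2) (by omega)] at h
    omega
  intro n i hi
  obtain ⟨k, rfl⟩ : ∃ k, i = k + 1 := ⟨i - 1, by omega⟩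
  rw [← hφ n (k + 1) hi]
  exact apply_eq_apply_zero_of_concave (u := fun k => φ (k + 1)) hconcave h12 k

/-- Lemma 1.4(2): let `f` be a subadditive function on `ℤ[A_∞]` with `f ∘ τ = f`,
`φ` the induced function of the quasi-length, and suppose
`f(y) + f(τ(y)) = ∑_{x ∈ y⁻} f(x)` holds for all vertices of quasi-length `≥ ℓ`.  If
(a) `φ(1) = φ(2)` and (b) `φ(i) ≥ φ(1)` for all `1 ≤ i < ℓ`, then `f` is constant. -/
theorem statement7 (f : ℤ × ℕ → ℕ)
    (hsub : ∀ (n : ℤ) (i : ℕ), 1 ≤ i →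
      (if i = 1 then f (n - 1, 2) else f (n, i - 1) + f (n - 1, i + 1)) ≤
        f (n, i) + f (n - 1, i))
    (htau : ∀ (n : ℤ) (i : ℕ), 1 ≤ i → f (n - 1, i) = f (n, i))
    (φ : ℕ → ℕ)
    (hφ : ∀ (n : ℤ) (i : ℕ), 1 ≤ i → φ i = f (n, i))
    (ℓ : ℕ) (hℓ : 1 ≤ ℓ)
    (hadd : ∀ (n : ℤ) (i : ℕ), ℓ ≤ i →
      f (n, i) + f (n - 1, i) =
        if i = 1 then f (n - 1, 2) else f (n, i - 1) + f (n - 1, i + 1))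
    (h12 : φ 1 = φ 2)
    (hge : ∀ i : ℕ, 1 ≤ i → i < ℓ → φ 1 ≤ φ i) :
    ∀ (n : ℤ) (i : ℕ), 1 ≤ i → f (n, i) = φ 1 :=
  statement7_general f hsub φ hφ h12
end

section
/- Let k be an algebraically closed field, Λ a finite-dimensional associative unital k-algebra, K a field extension of k, and M a Λ-module that is finite-dimensional over k. Then M is projective as a Λ-module if and only if M_K is projective as a Λ_K-module. -/
/-!
Let `π : (M →₀ Λ) → M` be the canonical surjection from the free module on `M`. Base change
`- ⊗_k K` is compatible with the `Λ`-action and sends free `Λ`-modules to free `Λ_K`-modules, so a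
splitting of `π` gives a splitting of `π_K`. Conversely, a `Λ_K`-linear splitting `G` of `π_K`
descends: for a `k`-linear `φ : K → k` with `φ 1 = 1` (which exists since `k` is a field),
`m ↦ (id ⊗ φ) (G (m ⊗ 1))` is a `Λ`-linear splitting of `π`.
-/

open TensorProduct

section BaseChange

variable (k K Λ M : Type*)
variable [Field k] [Field K] [Algebra k K]
variable [Ring Λ] [Algebra k Λ]
variable [AddCommGroup M] [Module k M] [Module Λ M] [IsScalarTower k Λ M]

/-- The action of `K` on the right-hand tensor factor of `M_K = M ⊗_k K`,
as a ring homomorphism `K →+* End_k (M ⊗_k K)`. -/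
noncomputable def rightSmulHom : K →+* Module.End k (M ⊗[k] K) where
  toFun c := LinearMap.lTensor M (LinearMap.mulLeft k c)
  map_one' := by
    show LinearMap.lTensor M (LinearMap.mulLeft k (1 : K)) = 1
    rw [LinearMap.mulLeft_one, LinearMap.lTensor_id]; rfl
  map_mul' c d := by
    show LinearMap.lTensor M (LinearMap.mulLeft k (c * d)) =
      LinearMap.lTensor M (LinearMap.mulLeft k c) * LinearMap.lTensor M (LinearMap.mulLeft k d)
    rw [LinearMap.mulLeft_mul, LinearMap.lTensor_comp]; rfl
  map_zero' := by
    show LinearMap.lTensor M (LinearMap.mulLeft k (0 : K)) = 0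
    rw [LinearMap.mulLeft_zero_eq_zero, LinearMap.lTensor_zero]
  map_add' c d := by
    show LinearMap.lTensor M (LinearMap.mulLeft k (c + d)) =
      LinearMap.lTensor M (LinearMap.mulLeft k c) + LinearMap.lTensor M (LinearMap.mulLeft k d)
    rw [show LinearMap.mulLeft k (c + d) = LinearMap.mulLeft k c + LinearMap.mulLeft k d from
      LinearMap.ext fun x => add_mul c d x, LinearMap.lTensor_add]

/-- `M_K = M ⊗_k K` as a `K`-module (via the right-hand tensor factor). -/
noncomputable def modKMK : Module K (M ⊗[k] K) :=
  Module.compHom _ (rightSmulHom k K M)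

/-- `M_K = M ⊗_k K` as a module over `Λ_K = Λ ⊗_k K`, with
`(λ ⊗ a) • (m ⊗ b) = (λ • m) ⊗ (a*b)`. -/
noncomputable def modLamKMK : Module (Λ ⊗[k] K) (M ⊗[k] K) := by
  letI : Module K (M ⊗[k] K) := modKMK k K M
  haveI : IsScalarTower k K (M ⊗[k] K) := by
    constructor
    intro a c x
    induction x using TensorProduct.induction_on with
    | zero => simp only [smul_zero]
    | tmul m b =>
        show (LinearMap.lTensor M (LinearMap.mulLeft k (a • c))) (m ⊗ₜ[k] b) =
          a • (LinearMap.lTensor M (LinearMap.mulLeft k c)) (m ⊗ₜ[k] b)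
        rw [LinearMap.lTensor_tmul, LinearMap.lTensor_tmul, LinearMap.mulLeft_apply,
          LinearMap.mulLeft_apply, Algebra.smul_mul_assoc, tmul_smul]
    | add x y hx hy =>
        show (LinearMap.lTensor M (LinearMap.mulLeft k (a • c))) (x + y) = _
        rw [map_add]
        show _ = a • ((LinearMap.lTensor M (LinearMap.mulLeft k c)) (x + y))
        rw [map_add, smul_add]
        exact congrArg₂ (· + ·) hx hy
  haveI : SMulCommClass Λ K (M ⊗[k] K) := by
    constructor
    intro l c x
    show l • (LinearMap.lTensor M (LinearMap.mulLeft k c)) x =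
      (LinearMap.lTensor M (LinearMap.mulLeft k c)) (l • x)
    induction x using TensorProduct.induction_on with
    | zero => simp only [smul_zero, map_zero]
    | tmul m b =>
        rw [smul_tmul', LinearMap.lTensor_tmul, smul_tmul', LinearMap.lTensor_tmul]
    | add x y hx hy => rw [smul_add, map_add, map_add, smul_add, hx, hy]
  exact TensorProduct.Algebra.module

end BaseChange

section LinearMapOfTmul

variable {R A B X Y : Type*} [CommSemiring R] [Semiring A] [Semiring B] [Algebra R A]
  [Algebra R B] [AddCommMonoid X] [AddCommMonoid Y] [Module (A ⊗[R] B) X] [Module (A ⊗[R] B) Y]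

noncomputable def LinearMap.ofMapSMulTmul (f : X →+ Y)
    (hf : ∀ (a : A) (b : B) (x : X), f ((a ⊗ₜ[R] b) • x) = (a ⊗ₜ[R] b) • f x) :
    X →ₗ[A ⊗[R] B] Y where
  toFun := f
  map_add' := f.map_add
  map_smul' r x := by
    induction r using TensorProduct.induction_on with
    | zero => simp
    | tmul a b => exact hf a b x
    | add r s hr hs => simp only [add_smul, map_add, hr, hs, RingHom.id_apply]

end LinearMapOfTmul

section EvalRight

variable {R A N X Y : Type*} [CommSemiring R] [Semiring A] [Algebra R A]
  [AddCommMonoid N] [Module R N]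
  [AddCommMonoid X] [Module R X] [Module A X] [IsScalarTower R A X]
  [AddCommMonoid Y] [Module R Y] [Module A Y] [IsScalarTower R A Y]

variable (A X) in
noncomputable def TensorProduct.evalRight (φ : N →ₗ[R] R) : X ⊗[R] N →ₗ[A] X :=
  (AlgebraTensorModule.rid R A X).toLinearMap ∘ₗ AlgebraTensorModule.lTensor A X φ

@[simp]
lemma TensorProduct.evalRight_tmul (φ : N →ₗ[R] R) (x : X) (n : N) :
    evalRight A X φ (x ⊗ₜ n) = φ n • x := rfl

lemma TensorProduct.map_evalRight (φ : N →ₗ[R] R) (f : X →ₗ[A] Y) (t : X ⊗[R] N) :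
    f (evalRight A X φ t) = evalRight A Y φ ((f.restrictScalars R).rTensor N t) := by
  induction t using TensorProduct.induction_on with
  | zero => simp
  | tmul x n => simp
  | add t u ht hu => simp_all

end EvalRight

section LamK

variable {k K Λ : Type*} [Field k] [Field K] [Algebra k K] [Ring Λ] [Algebra k Λ]
variable {M N P : Type*}
  [AddCommGroup M] [Module k M] [Module Λ M] [IsScalarTower k Λ M]
  [AddCommGroup N] [Module k N] [Module Λ N] [IsScalarTower k Λ N]
  [AddCommGroup P] [Module k P] [Module Λ P] [IsScalarTower k Λ P]

attribute [local instance] modLamKMK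

lemma modLamKMK_smul_tmul (l : Λ) (c : K) (m : M) (b : K) :
    (l ⊗ₜ[k] c) • (m ⊗ₜ[k] b) = (l • m) ⊗ₜ[k] (c * b) := rfl

lemma modLamKMK_tmul_one_smul (l : Λ) (x : M ⊗[k] K) : (l ⊗ₜ[k] (1 : K)) • x = l • x := by
  induction x using TensorProduct.induction_on with
  | zero => simp
  | tmul m b => rw [modLamKMK_smul_tmul, one_mul, smul_tmul']
  | add x y hx hy => rw [smul_add, smul_add, hx, hy]

variable (k K) in
noncomputable def LinearMap.baseChangeLamK (f : M →ₗ[Λ] N) : M ⊗[k] K →ₗ[Λ ⊗[k] K] N ⊗[k] K :=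
  .ofMapSMulTmul ((f.restrictScalars k).rTensor K).toAddMonoidHom fun l c x => by
    induction x using TensorProduct.induction_on with
    | zero => simp
    | tmul m b => simp [modLamKMK_smul_tmul]
    | add x y hx hy => simp_all [smul_add]

lemma LinearMap.coe_baseChangeLamK (f : M →ₗ[Λ] N) :
    ⇑(f.baseChangeLamK k K) = (f.restrictScalars k).rTensor K := rfl

lemma LinearMap.baseChangeLamK_comp (g : N →ₗ[Λ] P) (f : M →ₗ[Λ] N) :
    (g ∘ₗ f).baseChangeLamK k K = g.baseChangeLamK k K ∘ₗ f.baseChangeLamK k K :=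
  LinearMap.ext fun x => by
    rw [LinearMap.comp_apply, LinearMap.coe_baseChangeLamK, LinearMap.coe_baseChangeLamK,
      LinearMap.coe_baseChangeLamK, LinearMap.restrictScalars_comp, LinearMap.rTensor_comp_apply]

@[simp]
lemma LinearMap.baseChangeLamK_id : (LinearMap.id : M →ₗ[Λ] M).baseChangeLamK k K = .id :=
  LinearMap.ext fun x => by
    rw [LinearMap.coe_baseChangeLamK, LinearMap.restrictScalars_id, LinearMap.rTensor_id,
      LinearMap.id_apply, LinearMap.id_apply]

lemma finsuppLeft_tmul_smul {ι : Type*} [DecidableEq ι] (l : Λ) (c : K) (t : (ι →₀ Λ) ⊗[k] K) :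
    finsuppLeft k k Λ K ι ((l ⊗ₜ[k] c) • t) = (l ⊗ₜ[k] c) • finsuppLeft k k Λ K ι t := by
  induction t using TensorProduct.induction_on with
  | zero => simp
  | tmul p b =>
    induction p using Finsupp.induction_linear with
    | zero => simp
    | add p q hp hq => simp_all [smul_add, add_tmul]
    | single i μ =>
      simp only [Finsupp.smul_single, smul_eq_mul, modLamKMK_smul_tmul, finsuppLeft_apply_tmul,
        zero_tmul, Finsupp.single_zero, Finsupp.sum_single_index,
        Algebra.TensorProduct.tmul_mul_tmul]
  | add x y hx hy => simp_all [smul_add]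

variable (k K) in
noncomputable def finsuppLeftLamK (ι : Type*) [DecidableEq ι] :
    (ι →₀ Λ) ⊗[k] K ≃ₗ[Λ ⊗[k] K] ι →₀ Λ ⊗[k] K :=
  .ofBijective (.ofMapSMulTmul (finsuppLeft k k Λ K ι).toAddEquiv.toAddMonoidHom
    finsuppLeft_tmul_smul) (finsuppLeft k k Λ K ι).bijective

theorem Module.Projective.baseChangeLamK [Module.Projective Λ M] :
    Module.Projective (Λ ⊗[k] K) (M ⊗[k] K) := by
  classical
  obtain ⟨s, hs⟩ := projective_def'.mp ‹Module.Projective Λ M›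
  have : Module.Projective (Λ ⊗[k] K) ((M →₀ Λ) ⊗[k] K) := .of_equiv' (finsuppLeftLamK k K M).symm
  refine .of_split (s.baseChangeLamK k K) ((Finsupp.linearCombination Λ id).baseChangeLamK k K) ?_
  rw [← LinearMap.baseChangeLamK_comp, hs, LinearMap.baseChangeLamK_id]

noncomputable def LinearMap.restrictScalarsLeft (G : M ⊗[k] K →ₗ[Λ ⊗[k] K] N ⊗[k] K) :
    M ⊗[k] K →ₗ[Λ] N ⊗[k] K where
  toFun := G
  map_add' := G.map_add
  map_smul' l x := by
    simpa only [modLamKMK_tmul_one_smul, RingHom.id_apply] using G.map_smul (l ⊗ₜ 1) x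

theorem LinearMap.exists_rightInverse_of_baseChangeLamK (π : P →ₗ[Λ] M)
    {G : M ⊗[k] K →ₗ[Λ ⊗[k] K] P ⊗[k] K} (hG : π.baseChangeLamK k K ∘ₗ G = .id) :
    ∃ i : M →ₗ[Λ] P, π ∘ₗ i = .id := by
  obtain ⟨φ, hφ⟩ := (Algebra.linearMap k K).exists_leftInverse_of_injective
    (LinearMap.ker_eq_bot.mpr (algebraMap k K).injective)
  have hφ1 : φ 1 = 1 := by simpa using congr($hφ 1)
  refine ⟨evalRight Λ P φ ∘ₗ G.restrictScalarsLeft ∘ₗ (AlgebraTensorModule.mk k Λ M K).flip 1,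
    LinearMap.ext fun m => ?_⟩
  have hGm : π.baseChangeLamK k K (G (m ⊗ₜ 1)) = m ⊗ₜ 1 := congr($hG (m ⊗ₜ 1))
  calc π (evalRight Λ P φ (G (m ⊗ₜ 1)))
      = evalRight Λ M φ (π.baseChangeLamK k K (G (m ⊗ₜ 1))) := map_evalRight φ π _
    _ = m := by rw [hGm, evalRight_tmul, hφ1, one_smul]

variable (k K) in
theorem Module.Projective.of_baseChangeLamK [Module.Projective (Λ ⊗[k] K) (M ⊗[k] K)] :
    Module.Projective Λ M := by
  let π := Finsupp.linearCombination Λ (id : M → M)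
  have hπ : Function.Surjective (π.baseChangeLamK k K) :=
    LinearMap.rTensor_surjective K fun m => ⟨Finsupp.single m 1, by simp [π]⟩
  obtain ⟨G, hG⟩ := (π.baseChangeLamK k K).exists_rightInverse_of_surjective
    (LinearMap.range_eq_top.mpr hπ)
  obtain ⟨i, hi⟩ := π.exists_rightInverse_of_baseChangeLamK hG
  exact .of_split i π hi

end LamK

theorem statement9_general (k K Λ M : Type*)
    [Field k] [Field K] [Algebra k K]
    [Ring Λ] [Algebra k Λ]
    [AddCommGroup M] [Module k M] [Module Λ M] [IsScalarTower k Λ M] :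
    letI : Module (Λ ⊗[k] K) (M ⊗[k] K) := modLamKMK k K Λ M
    (Module.Projective Λ M ↔ Module.Projective (Λ ⊗[k] K) (M ⊗[k] K)) :=
  ⟨fun _ => .baseChangeLamK, fun _ => .of_baseChangeLamK k K⟩

/-- Lemma 2.1(2): let `k` be an algebraically closed field, `Λ` a finite-dimensional
`k`-algebra, `K : k` a field extension and `M` a finite-dimensional `Λ`-module.  Then
`M` is a projective `Λ`-module if and only if `M_K = M ⊗_k K` is a projective
`Λ_K`-module. -/
theorem statement9 (k K Λ M : Type*)
    [Field k] [IsAlgClosed k] [Field K] [Algebra k K]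
    [Ring Λ] [Algebra k Λ] [FiniteDimensional k Λ]
    [AddCommGroup M] [Module k M] [Module Λ M] [IsScalarTower k Λ M]
    [FiniteDimensional k M] :
    letI : Module (Λ ⊗[k] K) (M ⊗[k] K) := modLamKMK k K Λ M
    (Module.Projective Λ M ↔ Module.Projective (Λ ⊗[k] K) (M ⊗[k] K)) :=
  statement9_general k K Λ M
end

section
/- Let p be a prime and P a nontrivial finite p-group. If E₀ is a maximal elementary abelian subgroup of P with |E₀| = p, then every maximal elementary abelian subgroup F of P equals E₀; in particular E₀ is the unique maximal elementary abelian subgroup of P. -/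
/-- A subgroup `E` of a group `G` is an elementary abelian `p`-subgroup if it is
commutative and every element `x ∈ E` satisfies `x^p = 1`. -/
def IsElementaryAbelian (p : ℕ) {G : Type*} [Group G] (E : Subgroup G) : Prop :=
  (∀ x ∈ E, ∀ y ∈ E, x * y = y * x) ∧ ∀ x ∈ E, x ^ p = 1

/-!
Every maximal elementary abelian subgroup `F` contains each central element `z` of order `p`,
since `F ⊔ ⟨z⟩` is still elementary abelian. A nontrivial `p`-group has such a `z`, and if
`|E₀| = p` then `E₀ = ⟨z⟩ ≤ F`, so maximality of `E₀` forces `F = E₀`.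
-/

open Subgroup

section

variable {G : Type*} [Group G] {p : ℕ}

theorem isElementaryAbelian_zpowers {z : G} (hz : z ^ p = 1) :
    IsElementaryAbelian p (zpowers z) := by
  refine ⟨?_, ?_⟩
  · rintro _ ⟨a, rfl⟩ _ ⟨b, rfl⟩
    exact zpow_mul_comm z a b
  · rintro _ ⟨k, rfl⟩
    rw [← zpow_natCast, ← zpow_mul, mul_comm, zpow_mul, zpow_natCast, hz, one_zpow]

theorem IsElementaryAbelian.sup_of_le_center {F N : Subgroup G} (hF : IsElementaryAbelian p F)
    (hN : IsElementaryAbelian p N) (hNc : N ≤ center G) : IsElementaryAbelian p (F ⊔ N) := by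
  have hcomm (n : G) (hn : n ∈ N) (g : G) : Commute n g :=
    (mem_center_iff.mp (hNc hn) g).symm
  have : N.Normal := ⟨fun n hn g => by rwa [← (hcomm n hn g).eq, mul_inv_cancel_right]⟩
  refine ⟨?_, ?_⟩
  · intro x hx y hy
    obtain ⟨f, hf, n, hn, rfl⟩ := mem_sup_of_normal_right.mp hx
    obtain ⟨f', hf', n', hn', rfl⟩ := mem_sup_of_normal_right.mp hy
    have hff' : Commute f f' := hF.1 f hf f' hf'
    have hf_comm : Commute f (f' * n') := hff'.mul_right (hcomm n' hn' f).symm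
    exact (hf_comm.mul_left (hcomm n hn _)).eq
  · intro x hx
    obtain ⟨f, hf, n, hn, rfl⟩ := mem_sup_of_normal_right.mp hx
    rw [(hcomm n hn f).symm.mul_pow, hF.2 f hf, hN.2 n hn, one_mul]

theorem mem_of_maximal_isElementaryAbelian {F : Subgroup G}
    (hF : Maximal (IsElementaryAbelian p) F) {z : G} (hzc : z ∈ center G) (hz : z ^ p = 1) :
    z ∈ F := by
  have hle : F ⊔ zpowers z ≤ F :=
    hF.2 (hF.1.sup_of_le_center (isElementaryAbelian_zpowers hz) (zpowers_le.mpr hzc))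
      le_sup_left
  exact hle (mem_sup_right (mem_zpowers z))

theorem IsPGroup.exists_mem_center_orderOf_eq [Fact p.Prime] [Finite G] [Nontrivial G]
    (hG : IsPGroup p G) : ∃ z ∈ center G, orderOf z = p := by
  have := hG.center_nontrivial
  have hdvd : p ∣ Nat.card (center G) :=
    ((hG.to_subgroup (center G)).card_eq_or_dvd).resolve_left Finite.one_lt_card.ne'
  obtain ⟨z, hz⟩ := exists_prime_orderOf_dvd_card' p hdvd
  exact ⟨z, z.2, (orderOf_coe z).trans hz⟩

end

/-- Let `P` be a nontrivial finite `p`-group.  If `E₀` is a maximal elementary abelian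
subgroup of `P` with `|E₀| = p`, then every maximal elementary abelian subgroup `F` of
`P` equals `E₀`; in particular, `E₀` is the unique maximal elementary abelian subgroup. -/
theorem statement14 (p : ℕ) (hp : p.Prime) (P : Type*) [Group P] [Finite P]
    (hP : IsPGroup p P) [Nontrivial P]
    (E₀ : Subgroup P) (hE₀ : Maximal (IsElementaryAbelian p) E₀)
    (hcard : Nat.card E₀ = p) :
    ∀ F : Subgroup P, Maximal (IsElementaryAbelian p) F → F = E₀ := by
  intro F hF
  have : Fact p.Prime := ⟨hp⟩
  obtain ⟨z, hzc, hz⟩ := hP.exists_mem_center_orderOf_eq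
  have hzp : z ^ p = 1 := hz ▸ pow_orderOf_eq_one z
  have hzE₀ : zpowers z = E₀ :=
    eq_of_le_of_card_ge (zpowers_le.mpr (mem_of_maximal_isElementaryAbelian hE₀ hzc hzp))
      (by rw [hcard, Nat.card_zpowers, hz])
  have hE₀F : E₀ ≤ F := hzE₀ ▸ zpowers_le.mpr (mem_of_maximal_isElementaryAbelian hF hzc hzp)
  exact hE₀.eq_of_ge hF.1 hE₀F
end

section
/- Let G be a finite group and p a prime. If E₀ is a maximal elementary abelian p-subgroup of G with |E₀| = p, then every maximal elementary abelian p-subgroup E of G is conjugate to E₀ (there exists g ∈ G with gEg⁻¹ = E₀); in particular, every maximal elementary abelian p-subgroup of G has order p. -/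
/-!
By Sylow's theorem it suffices to compare maximal elementary abelian subgroups lying in one
Sylow `p`-subgroup `P` containing `E₀`, and two maximal ones that commute elementwise coincide,
since their join is again elementary abelian. The hypothesis `|E₀| = p` makes `E₀` central in
`P`: a central element of order `p` of `P` commutes with `E₀`, hence lies in `E₀` by maximality,
and so generates it. Thus every maximal elementary abelian subgroup of `P` commutes with `E₀`,
i.e. equals it.
-/

open Subgroup

section

variable {p : ℕ} {G H : Type*} [Group G] [Group H]

namespace IsElementaryAbelian

protected lemma closure {s : Set G} (hcomm : ∀ x ∈ s, ∀ y ∈ s, x * y = y * x)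
    (hpow : ∀ x ∈ s, x ^ p = 1) : IsElementaryAbelian p (closure s) := by
  have comm : ∀ x ∈ closure s, ∀ y ∈ closure s, x * y = y * x := fun x hx y hy =>
    Set.centralizer_centralizer_comm_of_comm hcomm x (closure_le_centralizer_centralizer s hx)
      y (closure_le_centralizer_centralizer s hy)
  refine ⟨comm, fun x hx => ?_⟩
  induction hx using closure_induction with
  | mem x hx => exact hpow x hx
  | one => exact one_pow p
  | mul x y hx hy ihx ihy =>
    rw [(show Commute x y from comm x hx y hy).mul_pow, ihx, ihy, one_mul]
  | inv x _ ih => rw [inv_pow, ih, inv_one]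

protected lemma sup {A B : Subgroup G} (hA : IsElementaryAbelian p A)
    (hB : IsElementaryAbelian p B) (hAB : ∀ a ∈ A, ∀ b ∈ B, a * b = b * a) :
    IsElementaryAbelian p (A ⊔ B) := by
  rw [sup_eq_closure]
  refine IsElementaryAbelian.closure ?_ ?_
  · rintro x (hx | hx) y (hy | hy)
    · exact hA.1 x hx y hy
    · exact hAB x hx y hy
    · exact (hAB y hy x hx).symm
    · exact hB.1 x hx y hy
  · rintro x (hx | hx)
    · exact hA.2 x hx
    · exact hB.2 x hx

lemma zpowers {z : G} (hz : z ^ p = 1) : IsElementaryAbelian p (zpowers z) := by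
  rw [zpowers_eq_closure]
  exact IsElementaryAbelian.closure (by simp) (by simpa)

protected lemma map (f : G →* H) {E : Subgroup G} (hE : IsElementaryAbelian p E) :
    IsElementaryAbelian p (E.map f) := by
  refine ⟨?_, ?_⟩
  · rintro _ ⟨x, hx, rfl⟩ _ ⟨y, hy, rfl⟩
    rw [← map_mul, ← map_mul, hE.1 x hx y hy]
  · rintro _ ⟨x, hx, rfl⟩
    rw [← map_pow, hE.2 x hx, map_one]

protected lemma comap {f : G →* H} (hf : Function.Injective f) {E : Subgroup H}
    (hE : IsElementaryAbelian p E) : IsElementaryAbelian p (E.comap f) := by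
  refine ⟨fun x hx y hy => hf ?_, fun x hx => hf ?_⟩
  · rw [map_mul, map_mul, hE.1 _ hx _ hy]
  · rw [map_pow, hE.2 _ hx, map_one]

lemma isPGroup {E : Subgroup G} (hE : IsElementaryAbelian p E) : IsPGroup p E :=
  fun x => ⟨1, Subtype.ext (by simpa using hE.2 x x.2)⟩

end IsElementaryAbelian

namespace Maximal

lemma isElementaryAbelian_map (f : G ≃* H) {E : Subgroup G}
    (hE : Maximal (IsElementaryAbelian p) E) :
    Maximal (IsElementaryAbelian p) (E.map f.toMonoidHom) := by
  refine ⟨hE.1.map _, fun K hK hEK => ?_⟩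
  have hKE : K.comap f.toMonoidHom ≤ E :=
    hE.2 (hK.comap f.injective) (map_le_iff_le_comap.1 hEK)
  calc K = (K.comap f.toMonoidHom).map f.toMonoidHom :=
        (map_comap_eq_self_of_surjective f.surjective K).symm
    _ ≤ E.map f.toMonoidHom := map_mono hKE

lemma eq_of_commute {A B : Subgroup G} (hA : Maximal (IsElementaryAbelian p) A)
    (hB : Maximal (IsElementaryAbelian p) B) (hAB : ∀ a ∈ A, ∀ b ∈ B, a * b = b * a) :
    A = B :=
  have hsup := hA.1.sup hB.1 hAB
  le_antisymm (le_sup_left.trans (hB.2 hsup le_sup_right))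
    (le_sup_right.trans (hA.2 hsup le_sup_left))

lemma mem_of_commute {E : Subgroup G} (hE : Maximal (IsElementaryAbelian p) E) {z : G}
    (hz : z ^ p = 1) (hzE : ∀ x ∈ E, x * z = z * x) : z ∈ E := by
  have hsup := hE.1.sup (IsElementaryAbelian.zpowers hz) fun x hx _ ⟨k, hk⟩ =>
    hk ▸ ((show Commute x z from hzE x hx).zpow_right k).eq
  exact zpowers_le.1 (le_sup_right.trans (hE.2 hsup le_sup_left))

end Maximal

lemma IsPGroup.exists_mem_centralizer_orderOf_eq_prime [Fact p.Prime] [Finite G]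
    {P : Subgroup G} (hP : IsPGroup p P) [Nontrivial P] :
    ∃ z ∈ P, z ∈ centralizer P ∧ orderOf z = p := by
  have := hP.center_nontrivial
  obtain ⟨n, hn, hcard⟩ := (hP.to_subgroup (center P)).nontrivial_iff_card.1 this
  obtain ⟨⟨z, hz⟩, hzp⟩ := exists_prime_orderOf_dvd_card' (G := center P) p
    (hcard ▸ dvd_pow_self p hn.ne')
  refine ⟨z, z.2, mem_centralizer_iff.2 fun y hy => ?_, ?_⟩
  · exact congrArg Subtype.val (mem_center_iff.1 hz ⟨y, hy⟩)
  · rwa [Subgroup.orderOf_mk, Subgroup.orderOf_mk] at hzp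

lemma Maximal.le_centralizer_of_card_eq_prime [Fact p.Prime] [Finite G] {E₀ : Subgroup G}
    (hE₀ : Maximal (IsElementaryAbelian p) E₀) (hcard : Nat.card E₀ = p) {P : Subgroup G}
    (hP : IsPGroup p P) (hE₀P : E₀ ≤ P) : E₀ ≤ centralizer P := by
  have : Nontrivial E₀ :=
    Finite.one_lt_card_iff_nontrivial.1 (hcard ▸ (Fact.out : p.Prime).one_lt)
  have : Nontrivial P := (inclusion_injective hE₀P).nontrivial
  obtain ⟨z, -, hzc, hz⟩ := hP.exists_mem_centralizer_orderOf_eq_prime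
  have hzE₀ : z ∈ E₀ := hE₀.mem_of_commute (hz ▸ pow_orderOf_eq_one z)
    fun x hx => mem_centralizer_iff.1 hzc x (hE₀P hx)
  have hgen : zpowers z = E₀ :=
    eq_of_le_of_card_ge (zpowers_le.2 hzE₀) (by rw [hcard, Nat.card_zpowers, hz])
  rwa [← hgen, zpowers_le]

lemma Sylow.exists_map_conj_le [Fact p.Prime] [Finite G] {E : Subgroup G} (hE : IsPGroup p E)
    (P : Sylow p G) : ∃ g : G, E.map (MulAut.conj g).toMonoidHom ≤ P := by
  obtain ⟨Q, hEQ⟩ := hE.exists_le_sylow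
  obtain ⟨g, rfl⟩ := MulAction.exists_smul_eq G Q P
  exact ⟨g, map_mono hEQ⟩

end

/-- Let `G` be a finite group and `p` a prime.  If `E₀` is a maximal elementary abelian
`p`-subgroup of `G` with `|E₀| = p`, then every maximal elementary abelian `p`-subgroup
`E` of `G` is conjugate to `E₀`, i.e. `gEg⁻¹ = E₀` for some `g ∈ G`; in particular every
maximal elementary abelian `p`-subgroup of `G` has order `p`. -/
theorem statement15 (p : ℕ) (hp : p.Prime) (G : Type*) [Group G] [Finite G]
    (E₀ : Subgroup G) (hE₀ : Maximal (IsElementaryAbelian p) E₀)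
    (hcard : Nat.card E₀ = p) :
    ∀ E : Subgroup G, Maximal (IsElementaryAbelian p) E →
      (∃ g : G, Subgroup.map (MulAut.conj g).toMonoidHom E = E₀) ∧ Nat.card E = p := by
  intro E hE
  have : Fact p.Prime := ⟨hp⟩
  obtain ⟨P, hE₀P⟩ := hE₀.1.isPGroup.exists_le_sylow
  have hE₀c := hE₀.le_centralizer_of_card_eq_prime hcard P.isPGroup' hE₀P
  obtain ⟨g, hgP⟩ := Sylow.exists_map_conj_le hE.1.isPGroup P
  have hgE : E.map (MulAut.conj g).toMonoidHom = E₀ :=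
    (hE.isElementaryAbelian_map (MulAut.conj g)).eq_of_commute hE₀
      fun x hx y hy => mem_centralizer_iff.1 (hE₀c hy) x (hgP hx)
  refine ⟨⟨g, hgE⟩, ?_⟩
  rw [← hcard, ← hgE, card_map_of_injective (MulAut.conj g).injective]
end

section
/- Let Γ = (Γ₀, Γ₁) be a locally finite quiver without loops or multiple arrows, and let G be an admissible group of quiver automorphisms of Γ. Then the canonical projection onto the orbit quiver Γ/G is a covering: for every vertex x ∈ Γ₀, the map y ↦ [y] restricts to a bijection from x⁺ onto [x]⁺ and to a bijection from x⁻ onto [x]⁻. -/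
/-! Admissibility says that no orbit meets `x⁺` twice, which is injectivity of `y ↦ [y]` on
`x⁺`. For surjectivity, an arrow `g • x → b` of `Γ` is carried by `g⁻¹` to the arrow
`x → g⁻¹ • b`. The statement for `x⁻` is the one for `x⁺` in the opposite quiver. -/

open MulAction Set

section OrbitQuiver

variable {G V : Type*} [Group G] [MulAction G V]

theorem injOn_orbitRel_mk {s : Set V} (hs : ∀ x : V, (orbit G x ∩ s).Subsingleton) :
    InjOn (Quotient.mk (orbitRel G V)) s := by
  intro y hy y' hy' h
  obtain ⟨g, rfl⟩ := mem_orbit_iff.mp (Quotient.eq.mp h)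
  exact hs y' ⟨mem_orbit _ g, hy⟩ ⟨mem_orbit_self y', hy'⟩

variable (Arrow : V → V → Prop)

theorem bijOn_orbitRel_mk_succ (hGaut : ∀ (g : G) (x y : V), Arrow (g • x) (g • y) ↔ Arrow x y)
    (hadm : ∀ x y : V, (orbit G x ∩ {z | Arrow y z}).Subsingleton) (x : V) :
    BijOn (Quotient.mk (orbitRel G V)) {y | Arrow x y}
      {c : Quotient (orbitRel G V) | ∃ a b : V, Arrow a b ∧
        Quotient.mk (orbitRel G V) a = Quotient.mk (orbitRel G V) x ∧
        Quotient.mk (orbitRel G V) b = c} := by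
  refine ⟨fun y hy => ⟨x, y, hy, rfl, rfl⟩, injOn_orbitRel_mk (hadm · x), ?_⟩
  rintro _ ⟨a, b, hab, ha, rfl⟩
  obtain ⟨g, rfl⟩ := mem_orbit_iff.mp (Quotient.eq.mp ha)
  refine ⟨g⁻¹ • b, ?_, Quotient.sound (mem_orbit _ g⁻¹)⟩
  rwa [mem_ofPred_eq, ← hGaut g, smul_inv_smul]

end OrbitQuiver

theorem statement16_general {V G : Type*} [Group G] [MulAction G V]
    (Arrow : V → V → Prop)
    (hGaut : ∀ (g : G) (x y : V), Arrow (g • x) (g • y) ↔ Arrow x y)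
    (hadm : ∀ x y : V,
      (MulAction.orbit G x ∩ ({y} ∪ {z | Arrow y z})).Subsingleton ∧
      (MulAction.orbit G x ∩ ({y} ∪ {z | Arrow z y})).Subsingleton)
    (x : V) :
    Set.BijOn (Quotient.mk (MulAction.orbitRel G V)) {y | Arrow x y}
      {c : Quotient (MulAction.orbitRel G V) | ∃ a b : V, Arrow a b ∧
        Quotient.mk (MulAction.orbitRel G V) a = Quotient.mk (MulAction.orbitRel G V) x ∧
        Quotient.mk (MulAction.orbitRel G V) b = c} ∧
    Set.BijOn (Quotient.mk (MulAction.orbitRel G V)) {y | Arrow y x}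
      {c : Quotient (MulAction.orbitRel G V) | ∃ a b : V, Arrow a b ∧
        Quotient.mk (MulAction.orbitRel G V) b = Quotient.mk (MulAction.orbitRel G V) x ∧
        Quotient.mk (MulAction.orbitRel G V) a = c} := by
  refine ⟨bijOn_orbitRel_mk_succ Arrow hGaut
    (fun x y => (hadm x y).1.anti (inter_subset_inter_right _ subset_union_right)) x, ?_⟩
  have hpred := bijOn_orbitRel_mk_succ (flip Arrow) (fun g a b => hGaut g b a)
    (fun x y => (hadm x y).2.anti (inter_subset_inter_right _ subset_union_right)) x
  convert hpred using 1
  · rfl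
  · ext c
    exact exists_comm

/-- Let `Γ` be a locally finite quiver without loops or multiple arrows (given by the
arrow relation `Arrow` on the vertex set `V`), and let `G` be a group acting on `V` by
quiver automorphisms which is admissible.  Then the canonical projection onto the orbit
quiver `Γ/G` is a covering: for every vertex `x`, the map `y ↦ [y]` restricts to a
bijection from `x⁺` onto `[x]⁺` and to a bijection from `x⁻` onto `[x]⁻`.  (An arrow
`[a] → [b]` of the orbit quiver is the existence of representatives `a' ∈ [a]`,
`b' ∈ [b]` with an arrow `a' → b'` in `Γ`.) -/
theorem statement16 {V G : Type*} [Group G] [MulAction G V]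
    (Arrow : V → V → Prop)
    (hnoloops : ∀ x : V, ¬ Arrow x x)
    (hlocfin : ∀ x : V, {y | Arrow x y ∨ Arrow y x}.Finite)
    (hGaut : ∀ (g : G) (x y : V), Arrow (g • x) (g • y) ↔ Arrow x y)
    (hadm : ∀ x y : V,
      (MulAction.orbit G x ∩ ({y} ∪ {z | Arrow y z})).Subsingleton ∧
      (MulAction.orbit G x ∩ ({y} ∪ {z | Arrow z y})).Subsingleton)
    (x : V) :
    Set.BijOn (Quotient.mk (MulAction.orbitRel G V)) {y | Arrow x y}
      {c : Quotient (MulAction.orbitRel G V) | ∃ a b : V, Arrow a b ∧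
        Quotient.mk (MulAction.orbitRel G V) a = Quotient.mk (MulAction.orbitRel G V) x ∧
        Quotient.mk (MulAction.orbitRel G V) b = c} ∧
    Set.BijOn (Quotient.mk (MulAction.orbitRel G V)) {y | Arrow y x}
      {c : Quotient (MulAction.orbitRel G V) | ∃ a b : V, Arrow a b ∧
        Quotient.mk (MulAction.orbitRel G V) b = Quotient.mk (MulAction.orbitRel G V) x ∧
        Quotient.mk (MulAction.orbitRel G V) a = c} :=
  statement16_general Arrow hGaut hadm x
end
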